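/- (Estimation.) Let Φ be an m×d real matrix with restricted isometry constants satisfying δ_{3s} ≤ δ_{4s} ≤ 0.1. Let T ⊆ {1,…,d} be a set of at most 3s indices, let x ∈ ℝ^d be s-sparse, let e ∈ ℝ^m, and set u = Φx + e. Define the least-squares signal estimate b ∈ ℝ^d by b|_T = (Φ_T* Φ_T)⁻¹ Φ_T* u (the matrix Φ_T* Φ_T being invertible since δ_{3s} < 1) and b|_{T^c} = 0. Then ‖x − b‖₂ ≤ 1.112 ‖x|_{T^c}‖₂ + 1.06 ‖e‖₂. -/

import Mathlib

/-- The Euclidean (ℓ2) norm of a finitely-indexed real vector. -/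
noncomputable def l2 {ι : Type*} [Fintype ι] (v : ι → ℝ) : ℝ :=
  Real.sqrt (∑ i, (v i) ^ 2)

/-- A vector is `s`-sparse if it has at most `s` nonzero coordinates. -/
def Sparse {d : ℕ} (s : ℕ) (v : Fin d → ℝ) : Prop :=
  {i | v i ≠ 0}.ncard ≤ s

/-- `δ` satisfies the restricted isometry inequalities of `Φ` at sparsity level `r`
(quadratic form); `δ_r ≤ δ` is equivalent to this (for `δ ≥ 0`). -/
def RICq {m d : ℕ} (Φ : Matrix (Fin m) (Fin d) ℝ) (r : ℕ) (δ : ℝ) : Prop :=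
  ∀ v : Fin d → ℝ, Sparse r v →
    (1 - δ) * (l2 v) ^ 2 ≤ (l2 (Φ.mulVec v)) ^ 2 ∧
      (l2 (Φ.mulVec v)) ^ 2 ≤ (1 + δ) * (l2 v) ^ 2

/-- The column submatrix of `Φ` with columns indexed by `T`. -/
def colSub {m d : ℕ} (Φ : Matrix (Fin m) (Fin d) ℝ) (T : Finset (Fin d)) :
    Matrix (Fin m) {j // j ∈ T} ℝ :=
  Matrix.of fun i j => Φ i j.1

/-!
With `h := b|_T - x|_T`, the normal equations of the least-squares problem read
`Φ_T* Φ_T h = Φ_T* (Φ x|_{T^c} + e)`, hence `‖Φ_T h‖² = ⟪Φ x|_{T^c}, Φ h⟫ + ⟪e, Φ_T h⟫`.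
Since `x|_{T^c}` and `h` have disjoint supports of total size at most `4s`, restricted
orthogonality bounds the first term by `δ ‖x|_{T^c}‖ ‖h‖`, and Cauchy–Schwarz bounds the second.
Together with `‖Φ_T h‖² ≥ (1 - δ) ‖h‖²` this gives `(1 - δ) ‖h‖ ≤ δ ‖x|_{T^c}‖ + √(1 - δ) ‖e‖`,
and `x - b = x|_{T^c} - h` finishes the proof.
-/

open Matrix

section l2

variable {ι : Type*} [Fintype ι]

theorem l2_eq_norm_toLp (v : ι → ℝ) : l2 v = ‖(WithLp.toLp 2 v : EuclideanSpace ℝ ι)‖ := by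
  simp [l2, EuclideanSpace.norm_eq]

@[simp]
theorem l2_zero : l2 (0 : ι → ℝ) = 0 := by
  simp [l2]

theorem l2_nonneg (v : ι → ℝ) : 0 ≤ l2 v := Real.sqrt_nonneg _

theorem l2_sq (v : ι → ℝ) : l2 v ^ 2 = ∑ i, v i ^ 2 :=
  Real.sq_sqrt (Finset.sum_nonneg fun _ _ => sq_nonneg _)

theorem dotProduct_self_eq_l2_sq (v : ι → ℝ) : v ⬝ᵥ v = l2 v ^ 2 := by
  rw [l2_sq]; simp only [dotProduct, sq]

theorem l2_eq_zero_iff {v : ι → ℝ} : l2 v = 0 ↔ v = 0 := by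
  simp [l2_eq_norm_toLp]

theorem l2_smul (c : ℝ) (v : ι → ℝ) : l2 (c • v) = |c| * l2 v := by
  simp [l2_eq_norm_toLp, WithLp.toLp_smul, norm_smul]

theorem l2_sub_le (v w : ι → ℝ) : l2 (v - w) ≤ l2 v + l2 w := by
  simpa [l2_eq_norm_toLp, WithLp.toLp_sub] using norm_sub_le _ _

theorem dotProduct_le_l2_mul_l2 (v w : ι → ℝ) : v ⬝ᵥ w ≤ l2 v * l2 w := by
  simpa [l2_eq_norm_toLp, EuclideanSpace.inner_toLp_toLp, dotProduct_comm] using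
    real_inner_le_norm (WithLp.toLp 2 v : EuclideanSpace ℝ ι) (WithLp.toLp 2 w)

theorem l2_add_sq_of_disjoint {u v : ι → ℝ} (huv : ∀ i, u i * v i = 0) :
    l2 (u + v) ^ 2 = l2 u ^ 2 + l2 v ^ 2 := by
  simp only [l2_sq, ← Finset.sum_add_distrib, Pi.add_apply]
  exact Finset.sum_congr rfl fun i _ => by linear_combination 2 * huv i

end l2

namespace Sparse

variable {d r r' : ℕ} {v w : Fin d → ℝ}

theorem of_support_subset (h : {i | v i ≠ 0} ⊆ {i | w i ≠ 0}) (hw : Sparse r w) :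
    Sparse r v :=
  (Set.ncard_le_ncard h (Set.toFinite _)).trans hw

theorem mono (hrr' : r ≤ r') (hv : Sparse r v) : Sparse r' v :=
  le_trans hv hrr'

theorem of_support_subset_finset {T : Finset (Fin d)} (h : ∀ i ∉ T, v i = 0) :
    Sparse T.card v := by
  refine (Set.ncard_le_ncard (t := (T : Set (Fin d))) (fun i hi => ?_)).trans
    (Set.ncard_coe_finset T).le
  by_contra hiT
  exact hi (h i hiT)

theorem smul (c : ℝ) (hv : Sparse r v) : Sparse r (c • v) :=
  of_support_subset (fun _ hi => right_ne_zero_of_mul hi) hv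

theorem add (hv : Sparse r v) (hw : Sparse r' w) : Sparse (r + r') (v + w) := by
  refine (Set.ncard_le_ncard (t := {i | v i ≠ 0} ∪ {i | w i ≠ 0}) (fun i hi => ?_)).trans
    ((Set.ncard_union_le _ _).trans (add_le_add hv hw))
  by_contra h
  simp_all

theorem sub (hv : Sparse r v) (hw : Sparse r' w) : Sparse (r + r') (v - w) := by
  simpa [sub_eq_add_neg] using hv.add (hw.smul (-1))

end Sparse

namespace RICq

variable {m d r : ℕ} {δ : ℝ} {Φ : Matrix (Fin m) (Fin d) ℝ}

-- Polarization: `4 ⟪Φu, Φv⟫ = ‖Φ(u + v)‖² - ‖Φ(u - v)‖²`, where for disjointly supported `u, v`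
-- both `u + v` and `u - v` have squared norm `‖u‖² + ‖v‖²`.
theorem dotProduct_mulVec_le_of_disjoint (hΦ : RICq Φ r δ) {u v : Fin d → ℝ}
    (hadd : Sparse r (u + v)) (hsub : Sparse r (u - v)) (huv : ∀ i, u i * v i = 0) :
    Φ *ᵥ u ⬝ᵥ Φ *ᵥ v ≤ δ * (l2 u ^ 2 + l2 v ^ 2) / 2 := by
  have hpol : 4 * (Φ *ᵥ u ⬝ᵥ Φ *ᵥ v) = l2 (Φ *ᵥ (u + v)) ^ 2 - l2 (Φ *ᵥ (u - v)) ^ 2 := by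
    simp only [← dotProduct_self_eq_l2_sq, mulVec_add, mulVec_sub, add_dotProduct,
      dotProduct_add, sub_dotProduct, dotProduct_sub, dotProduct_comm (Φ *ᵥ v)]
    ring
  have hneg : l2 (u - v) ^ 2 = l2 u ^ 2 + l2 v ^ 2 := by
    rw [sub_eq_add_neg, l2_add_sq_of_disjoint fun i => by simp [huv i], ← neg_one_smul ℝ v,
      l2_smul]
    simp
  have hup := (hΦ _ hadd).2
  have hlo := (hΦ _ hsub).1
  rw [l2_add_sq_of_disjoint huv] at hup
  rw [hneg] at hlo
  linarith

theorem dotProduct_mulVec_le_mul_of_disjoint (hΦ : RICq Φ r δ) {p q : ℕ}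
    (hpq : p + q ≤ r) {u v : Fin d → ℝ} (hu : Sparse p u) (hv : Sparse q v)
    (huv : ∀ i, u i * v i = 0) :
    Φ *ᵥ u ⬝ᵥ Φ *ᵥ v ≤ δ * l2 u * l2 v := by
  rcases eq_or_ne u 0 with rfl | hu0
  · simp
  rcases eq_or_ne v 0 with rfl | hv0
  · simp
  have hα : 0 < l2 u := (l2_nonneg u).lt_of_ne' (l2_eq_zero_iff.not.2 hu0)
  have hβ : 0 < l2 v := (l2_nonneg v).lt_of_ne' (l2_eq_zero_iff.not.2 hv0)
  -- on unit vectors the bound `δ (‖u‖² + ‖v‖²) / 2` becomes `δ ‖u‖ ‖v‖`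
  set u' := (l2 u)⁻¹ • u
  set v' := (l2 v)⁻¹ • v
  have hunit : ∀ w : Fin d → ℝ, 0 < l2 w → l2 ((l2 w)⁻¹ • w) ^ 2 = 1 := fun w hw => by
    rw [l2_smul, abs_of_pos (inv_pos.2 hw), inv_mul_cancel₀ hw.ne', one_pow]
  have hdisj : ∀ i, u' i * v' i = 0 := fun i => by
    simp only [u', v', Pi.smul_apply, smul_eq_mul]
    linear_combination (l2 u)⁻¹ * (l2 v)⁻¹ * huv i
  have key := hΦ.dotProduct_mulVec_le_of_disjoint (((hu.smul _).add (hv.smul _)).mono hpq)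
    (((hu.smul _).sub (hv.smul _)).mono hpq) hdisj
  rw [hunit u hα, hunit v hβ, mulVec_smul, mulVec_smul, smul_dotProduct, dotProduct_smul,
    smul_eq_mul, smul_eq_mul] at key
  calc Φ *ᵥ u ⬝ᵥ Φ *ᵥ v = (l2 u * l2 v) * ((l2 u)⁻¹ * ((l2 v)⁻¹ * (Φ *ᵥ u ⬝ᵥ Φ *ᵥ v))) := by
        field_simp
    _ ≤ (l2 u * l2 v) * (δ * (1 + 1) / 2) := by gcongr
    _ = δ * l2 u * l2 v := by ring

end RICq

section extendByZero

variable {m d : ℕ} (T : Finset (Fin d))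

def extendByZero (w : {j // j ∈ T} → ℝ) : Fin d → ℝ :=
  fun j => if h : j ∈ T then w ⟨j, h⟩ else 0

variable {T}

theorem sum_extendByZero (g : Fin d → ℝ → ℝ) (hg : ∀ j, g j 0 = 0) (w : {j // j ∈ T} → ℝ) :
    ∑ j, g j (extendByZero T w j) = ∑ j : {j // j ∈ T}, g j (w j) := by
  rw [← Finset.sum_subset (Finset.subset_univ T) fun j _ hj => by simp [extendByZero, hj, hg],
    ← Finset.sum_attach T, Finset.univ_eq_attach]
  exact Finset.sum_congr rfl fun j _ => by simp [extendByZero, j.2]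

theorem l2_extendByZero (w : {j // j ∈ T} → ℝ) : l2 (extendByZero T w) = l2 w := by
  simp only [l2, sum_extendByZero (fun _ a => a ^ 2) (fun _ => zero_pow two_ne_zero)]

theorem mulVec_extendByZero (Φ : Matrix (Fin m) (Fin d) ℝ) (w : {j // j ∈ T} → ℝ) :
    Φ *ᵥ extendByZero T w = colSub Φ T *ᵥ w := by
  ext i
  exact sum_extendByZero (fun j a => Φ i j * a) (fun _ => mul_zero _) w

theorem sparse_extendByZero (w : {j // j ∈ T} → ℝ) : Sparse T.card (extendByZero T w) :=
  Sparse.of_support_subset_finset fun _ hj => dif_neg hj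

theorem extendByZero_restrict_add_compl (x : Fin d → ℝ) :
    extendByZero T (fun j => x j) + (fun i => if i ∈ T then 0 else x i) = x := by
  ext j
  by_cases hj : j ∈ T <;> simp [extendByZero, hj]

end extendByZero

namespace RICq

variable {m d r : ℕ} {δ : ℝ} {Φ : Matrix (Fin m) (Fin d) ℝ} {T : Finset (Fin d)}

theorem mul_l2_sq_le_colSub_mulVec (hΦ : RICq Φ r δ) (hT : T.card ≤ r)
    (w : {j // j ∈ T} → ℝ) : (1 - δ) * l2 w ^ 2 ≤ l2 (colSub Φ T *ᵥ w) ^ 2 := by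
  simpa [mulVec_extendByZero, l2_extendByZero] using
    (hΦ _ ((sparse_extendByZero w).mono hT)).1

theorem posDef_gram (hΦ : RICq Φ r δ) (hδ : δ < 1) (hT : T.card ≤ r) :
    ((colSub Φ T)ᵀ * colSub Φ T).PosDef := by
  rw [← conjTranspose_eq_transpose_of_trivial]
  refine .conjTranspose_mul_self _ fun w w' hww' => ?_
  have hlow := hΦ.mul_l2_sq_le_colSub_mulVec hT (w - w')
  rw [mulVec_sub, hww', sub_self, l2_zero] at hlow
  have : l2 (w - w') ^ 2 ≤ 0 := by nlinarith
  exact sub_eq_zero.1 (l2_eq_zero_iff.1 (pow_eq_zero_iff two_ne_zero |>.1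
    (le_antisymm this (sq_nonneg _))))

theorem l2_colSub_mulVec_sq_le (hΦ : RICq Φ r δ) {p : ℕ} (hpT : p + T.card ≤ r)
    {z : Fin d → ℝ} (hz : Sparse p z) (hzT : ∀ i ∈ T, z i = 0) (e : Fin m → ℝ)
    {h : {j // j ∈ T} → ℝ}
    (hh : ((colSub Φ T)ᵀ * colSub Φ T) *ᵥ h = (colSub Φ T)ᵀ *ᵥ (Φ *ᵥ z + e)) :
    l2 (colSub Φ T *ᵥ h) ^ 2 ≤ δ * l2 z * l2 h + l2 e * l2 (colSub Φ T *ᵥ h) := by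
  set A := colSub Φ T
  have hdisj : ∀ i, z i * extendByZero T h i = 0 := fun i => by
    by_cases hi : i ∈ T <;> simp [extendByZero, hi, hzT]
  calc l2 (A *ᵥ h) ^ 2 = (Φ *ᵥ z + e) ⬝ᵥ A *ᵥ h := by
        rw [← dotProduct_self_eq_l2_sq, dotProduct_mulVec, dotProduct_mulVec, ← mulVec_transpose,
          ← mulVec_transpose, ← hh, mulVec_mulVec]
    _ = Φ *ᵥ z ⬝ᵥ Φ *ᵥ extendByZero T h + e ⬝ᵥ A *ᵥ h := by
        rw [add_dotProduct, mulVec_extendByZero]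
    _ ≤ δ * l2 z * l2 h + l2 e * l2 (A *ᵥ h) := by
        gcongr
        · simpa [l2_extendByZero] using
            hΦ.dotProduct_mulVec_le_mul_of_disjoint hpT hz (sparse_extendByZero h) hdisj
        · exact dotProduct_le_l2_mul_l2 _ _

end RICq

theorem gram_mulVec_leastSquares_sub {m d : ℕ} {Φ : Matrix (Fin m) (Fin d) ℝ}
    {T : Finset (Fin d)} (hG : IsUnit ((colSub Φ T)ᵀ * colSub Φ T)) (x : Fin d → ℝ)
    (e : Fin m → ℝ) :
    ((colSub Φ T)ᵀ * colSub Φ T) *ᵥ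
        (((colSub Φ T)ᵀ * colSub Φ T)⁻¹ *ᵥ ((colSub Φ T)ᵀ *ᵥ (Φ *ᵥ x + e)) -
          fun j : {j // j ∈ T} => x j) =
      (colSub Φ T)ᵀ *ᵥ (Φ *ᵥ (fun i => if i ∈ T then 0 else x i) + e) := by
  have hx : Φ *ᵥ x = colSub Φ T *ᵥ (fun j => x j) + Φ *ᵥ (fun i => if i ∈ T then 0 else x i) := by
    rw [← mulVec_extendByZero, ← mulVec_add, extendByZero_restrict_add_compl]
  rw [mulVec_sub, mulVec_mulVec, mul_nonsing_inv _ ((isUnit_iff_isUnit_det _).1 hG),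
    one_mulVec, hx, ← mulVec_mulVec, mulVec_add, mulVec_add, mulVec_add]
  abel

theorem one_sub_mul_le_of_sq_bounds {δ a t ε N : ℝ} (hδ0 : 0 ≤ δ) (hδ1 : δ < 1) (ha : 0 ≤ a)
    (ht : 0 ≤ t) (hε : 0 ≤ ε) (hN : 0 ≤ N) (hlow : (1 - δ) * t ^ 2 ≤ N ^ 2)
    (hup : N ^ 2 ≤ δ * a * t + ε * N) :
    (1 - δ) * t ≤ δ * a + √(1 - δ) * ε := by
  set c := √(1 - δ)
  have hc : 0 < c := Real.sqrt_pos.2 (by linarith)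
  have hc2 : c ^ 2 = 1 - δ := Real.sq_sqrt (by linarith)
  have hct : c * t ≤ N :=
    (pow_le_pow_iff_left₀ (by positivity) hN two_ne_zero).1 (by rwa [mul_pow, hc2])
  have hcN : c * N ≤ δ * a + c * ε := by
    rcases hN.eq_or_lt with rfl | hN
    · simp only [mul_zero]; positivity
    · have : c * N ^ 2 ≤ (δ * a + c * ε) * N := by
        nlinarith [mul_le_mul_of_nonneg_left hct (mul_nonneg hδ0 ha)]
      nlinarith
  calc (1 - δ) * t = c * (c * t) := by rw [← mul_assoc, ← sq, hc2]
    _ ≤ c * N := by gcongr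
    _ ≤ δ * a + c * ε := hcN

theorem stmt11_general (m d s : ℕ)
    (Φ : Matrix (Fin m) (Fin d) ℝ) (hΦ : RICq Φ (4 * s) (1 / 10))
    (T : Finset (Fin d)) (hT : T.card ≤ 3 * s)
    (x : Fin d → ℝ) (hx : Sparse s x) (e : Fin m → ℝ)
    (b : Fin d → ℝ)
    (hb : b = fun j => if h : j ∈ T then
        (((colSub Φ T).transpose * colSub Φ T)⁻¹.mulVec
          ((colSub Φ T).transpose.mulVec (Φ.mulVec x + e))) ⟨j, h⟩
      else 0) :
    l2 (x - b) ≤ 1.112 * l2 (fun i => if i ∈ T then 0 else x i) + 1.06 * l2 e := by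
  set A := colSub Φ T
  set xc : Fin d → ℝ := fun i => if i ∈ T then 0 else x i
  set h := (Aᵀ * A)⁻¹ *ᵥ (Aᵀ *ᵥ (Φ *ᵥ x + e)) - fun j : {j // j ∈ T} => x j
  have hxb : x - b = xc - extendByZero T h := by
    subst hb
    ext j
    by_cases hj : j ∈ T <;> simp [extendByZero, hj, h, xc]
  have hxc : Sparse s xc := hx.of_support_subset fun i hi => by
    by_cases hiT : i ∈ T <;> simp_all [xc]
  have hT4 : T.card ≤ 4 * s := by omega
  have hnormal := gram_mulVec_leastSquares_sub (hΦ.posDef_gram (by norm_num) hT4).isUnit x e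
  have hest := one_sub_mul_le_of_sq_bounds (by norm_num) (by norm_num) (l2_nonneg xc)
    (l2_nonneg h) (l2_nonneg e) (l2_nonneg _) (hΦ.mul_l2_sq_le_colSub_mulVec hT4 h)
    (hΦ.l2_colSub_mulVec_sq_le (by omega) hxc (fun i hi => if_pos hi) e hnormal)
  have hsqrt : √(1 - 1 / 10 : ℝ) ≤ 0.954 := Real.sqrt_le_iff.2 ⟨by norm_num, by norm_num⟩
  calc l2 (x - b) ≤ l2 xc + l2 h := by
        rw [hxb, ← l2_extendByZero h]; exact l2_sub_le _ _
    _ ≤ 1.112 * l2 xc + 1.06 * l2 e := by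
        -- `1 + 1 / 9 ≤ 1.112` and `√0.9 / 0.9 ≤ 0.954 / 0.9 = 1.06`
        nlinarith [l2_nonneg xc, mul_le_mul_of_nonneg_right hsqrt (l2_nonneg e)]

/-- **Estimation.** Suppose `δ_{4s} ≤ 0.1` (hence `δ_{3s} ≤ δ_{4s} ≤ 0.1`).
Let `|T| ≤ 3s`, `x` be `s`-sparse, `u = Φx + e`, and let `b` be the least-squares
estimate: `b|_T = (Φ_T* Φ_T)⁻¹ Φ_T* u` and `b|_{T^c} = 0`. Then
`‖x − b‖₂ ≤ 1.112 ‖x|_{T^c}‖₂ + 1.06 ‖e‖₂`. -/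
theorem stmt11 (m d s : ℕ) (hs : 0 < s)
    (Φ : Matrix (Fin m) (Fin d) ℝ) (hΦ : RICq Φ (4 * s) (1 / 10))
    (T : Finset (Fin d)) (hT : T.card ≤ 3 * s)
    (x : Fin d → ℝ) (hx : Sparse s x) (e : Fin m → ℝ)
    (b : Fin d → ℝ)
    (hb : b = fun j => if h : j ∈ T then
        (((colSub Φ T).transpose * colSub Φ T)⁻¹.mulVec
          ((colSub Φ T).transpose.mulVec (Φ.mulVec x + e))) ⟨j, h⟩
      else 0) :
    l2 (x - b) ≤ 1.112 * l2 (fun i => if i ∈ T then 0 else x i) + 1.06 * l2 e :=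
  stmt11_general m d s Φ hΦ T hT x hx e b hb
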